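/- Let J > 0 and J₀ > 0. Then there exists β₀ > 0 such that for every β ≥ β₀ the equation m = sinh(βJ·m²) / √( sinh(βJ·m²)² + e^{−4βJ₀} ) has a solution m in the open interval (0,1). -/
import Mathlib


open Real

/-- Low-temperature existence of a nonzero solution of the self-consistency equation
for the 1D Ising chain (coupling `J₀`) perturbed by a fully connected 3-spin
interaction: there is `β₀ > 0` such that for all `β ≥ β₀` the equation
`m = sinh(βJ m²)/√(sinh(βJ m²)² + e^{-4βJ₀})` has a solution `m ∈ (0,1)`. -/
theorem low_temperature_nonzero_solution
    (J J₀ : ℝ) (hJ : 0 < J) (hJ₀ : 0 < J₀) :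
    ∃ β₀ : ℝ, 0 < β₀ ∧ ∀ β : ℝ, β₀ ≤ β →
      ∃ m ∈ Set.Ioo (0 : ℝ) 1,
        m = Real.sinh (β * J * m ^ 2) /
              Real.sqrt ((Real.sinh (β * J * m ^ 2)) ^ 2 + Real.exp (-(4 * β * J₀))) := by
  refine ⟨max (4 / J) 1, lt_max_of_lt_right one_pos, ?_⟩
  intro β hβ
  have hβ1 : (1:ℝ) ≤ β := (le_max_right _ _).trans hβ
  have hβJ : (4:ℝ) ≤ β * J := by
    have h4 : 4 / J ≤ β := (le_max_left _ _).trans hβ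
    have := (div_le_iff₀ hJ).mp h4
    linarith
  set c := Real.exp (-(4 * β * J₀)) with hc
  have hc0 : 0 < c := Real.exp_pos _
  have hc1 : c ≤ 1 := by
    rw [hc]
    apply Real.exp_le_one_iff.mpr
    nlinarith
  set g : ℝ → ℝ := fun m =>
    Real.sinh (β * J * m ^ 2) / Real.sqrt ((Real.sinh (β * J * m ^ 2)) ^ 2 + c) with hg
  have hden : ∀ m : ℝ, 0 < Real.sqrt ((Real.sinh (β * J * m ^ 2)) ^ 2 + c) := fun m =>
    Real.sqrt_pos.2 (by positivity)
  have hcont : Continuous g := by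
    apply Continuous.div
    · fun_prop
    · apply Continuous.sqrt; fun_prop
    · intro m; exact (hden m).ne'
  have hlt1 : ∀ m : ℝ, g m < 1 := by
    intro m
    rw [hg]
    simp only
    rw [div_lt_one (hden m)]
    have h1 : Real.sinh (β * J * m ^ 2) ≤ |Real.sinh (β * J * m ^ 2)| := le_abs_self _
    have h2 : |Real.sinh (β * J * m ^ 2)| <
        Real.sqrt ((Real.sinh (β * J * m ^ 2)) ^ 2 + c) := by
      rw [← Real.sqrt_sq_eq_abs]
      exact Real.sqrt_lt_sqrt (sq_nonneg _) (by linarith)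
    linarith
  have hhalf : (1:ℝ)/2 < g (1/2) := by
    have harg : (1:ℝ) ≤ β * J * (1/2) ^ 2 := by nlinarith
    have hs : (1:ℝ) ≤ Real.sinh (β * J * (1/2) ^ 2) := by
      have h := (Real.self_le_sinh_iff (x := β * J * (1/2) ^ 2)).mpr (by linarith)
      linarith
    rw [hg]
    simp only
    rw [lt_div_iff₀ (hden (1/2))]
    have h2 : Real.sqrt ((Real.sinh (β * J * (1/2) ^ 2)) ^ 2 + c) <
        2 * Real.sinh (β * J * (1/2) ^ 2) := by
      rw [Real.sqrt_lt' (by linarith)]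
      nlinarith
    linarith
  -- IVT on [1/2, 1] for f m = g m - m
  set f : ℝ → ℝ := fun m => g m - m with hf
  have hcf : ContinuousOn f (Set.Icc (1/2 : ℝ) 1) :=
    (hcont.sub continuous_id).continuousOn
  have key : (0:ℝ) ∈ Set.Icc (f 1) (f (1/2)) := by
    constructor
    · have := hlt1 1; simp only [hf]; linarith
    · simp only [hf]; linarith
  obtain ⟨m, hm, hfm⟩ := intermediate_value_Icc' (by norm_num : (1/2:ℝ) ≤ 1) hcf key
  have hmg : m = g m := by simp only [hf] at hfm; linarith
  refine ⟨m, ⟨?_, ?_⟩, hmg⟩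
  · linarith [hm.1]
  · rw [hmg]; exact hlt1 m
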